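/- Fix integers i ≤ j, n ≥ 2, a real ρ ∈ (0,1), and configurations x₁,…,xₙ such that every pair appearing as (arrivals, services) in the recursive definition of Dⁿ(x₁,…,xₙ) has finite queue lengths; let dₙ = Dⁿ(x₁,…,xₙ). Then max_{l ∈ [i,j]} | dₙ[i,l] − ρ(l−i+1) | ≤ 2 ∑_{k=1}^{n} max_{l ∈ [i,j]} | x_k[i,l] − ρ(l−i+1) |. -/

import Mathlib

open scoped BigOperators

/-- A particle configuration on `ℤ`: a `{0,1}`-valued function. -/
abbrev Config := ℤ → ℤ

/-- `x` takes only the values `0` and `1`. -/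
def IsConfig (x : Config) : Prop := ∀ i, x i = 0 ∨ x i = 1

/-- `x[i,j] = ∑_{k=i}^j x(k)` (zero if `j < i`). -/
noncomputable def cnt (x : Config) (i j : ℤ) : ℤ := ∑ k ∈ Finset.Icc i j, x k

/-- `(a,s)` has finite queue lengths. -/
def FinQ (a s : Config) : Prop :=
  ∀ i : ℤ, BddAbove {v : ℤ | ∃ j ≤ i, v = cnt a j i - cnt s j i}

/-- The queue length `Q_i(a,s) = sup_{j ≤ i} max(a[j,i] - s[j,i], 0)`. -/
noncomputable def queue (a s : Config) (i : ℤ) : ℤ :=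
  sSup {q : ℤ | ∃ j ≤ i, q = max (cnt a j i - cnt s j i) 0}

/-- The departure configuration `D(a,s)`. -/
noncomputable def dep (a s : Config) : Config := fun i =>
  if s i = 1 ∧ (0 < queue a s (i - 1) ∨ a i = 1) then 1 else 0

/-- The unused-service configuration `U(a,s)`. -/
noncomputable def unusedSrv (a s : Config) : Config := fun i =>
  if s i = 1 ∧ queue a s (i - 1) = 0 ∧ a i = 0 then 1 else 0

/-- `R(a,s)(i) = a(i) + U(a,s)(i)`. -/
noncomputable def Rmap (a s : Config) : Config := fun i => a i + unusedSrv a s i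

/-- Truncation: `x_{n,0}(i) = x(i)` for `i ≥ n`, `0` otherwise. -/
def trunc (x : Config) (n : ℤ) : Config := fun i => if n ≤ i then x i else 0

/-- Left-peeling tandem queue: `Dtandem x [s₁,…,s_k] = D(…D(D(x,s₁),s₂)…,s_k)`. -/
noncomputable def Dtandem : Config → List Config → Config
  | x, [] => x
  | x, s :: rest => Dtandem (dep x s) rest

/-- `DtandemList [x₁,…,xₙ] = Dⁿ(x₁,…,xₙ)`. -/
noncomputable def DtandemList : List Config → Config
  | [] => fun _ => 0
  | x :: rest => Dtandem x rest

/-- `DtandemN x = Dⁿ(x 0, …, x (n-1))`. -/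
noncomputable def DtandemN {n : ℕ} (x : Fin n → Config) : Config :=
  DtandemList (List.ofFn x)

/-- Every pair appearing as (arrivals, services) in the recursive definition of the
tandem departure map has finite queue lengths. -/
def TandemFinQ : List Config → Prop
  | [] => True
  | [_] => True
  | x :: s :: rest => FinQ x s ∧ TandemFinQ (dep x s :: rest)
  termination_by l => l.length

/-!
For a single queue the departures satisfy `d[i,l] = a[i,l] + Q_{i-1} - Q_l`. If `k ∈ [i-1,l]` is
the last time at which the queue was empty (or `k = i-1`), then
`Q_l ≤ Q_{i-1} + a[k+1,l] - s[k+1,l]`, whence `d[i,l] ≥ a[i,k] + s[k+1,l]`; on the other hand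
`d ≤ s`. So the discrepancy of `D(a,s)` from `ρ(l-i+1)` on `[i,j]` is at most that of `a` plus
twice that of `s`. Iterating along the tandem counts the first input once and every server twice.
-/

open Finset

lemma cnt_of_lt (x : Config) {m l : ℤ} (h : l < m) : cnt x m l = 0 := by
  rw [cnt, Icc_eq_empty_of_lt h, sum_empty]

lemma cnt_succ (x : Config) {m l : ℤ} (h : m ≤ l + 1) :
    cnt x m (l + 1) = cnt x m l + x (l + 1) := by
  rw [cnt, cnt, ← Order.succ_eq_add_one, ← insert_Icc_right_eq_Icc_succ (by simpa using h),
    sum_insert (by simp), add_comm]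

lemma cnt_le_cnt {x y : Config} (h : ∀ k, x k ≤ y k) (m l : ℤ) : cnt x m l ≤ cnt y m l :=
  sum_le_sum fun k _ => h k

section Queue

variable {a s : Config}

lemma queue_le {i B : ℤ} (h0 : 0 ≤ B) (hB : ∀ j ≤ i, cnt a j i - cnt s j i ≤ B) :
    queue a s i ≤ B :=
  csSup_le ⟨_, i, le_rfl, rfl⟩ <| by
    rintro q ⟨j, hj, rfl⟩
    exact max_le (hB j hj) h0

lemma max_le_queue (h : FinQ a s) {j i : ℤ} (hj : j ≤ i) :
    max (cnt a j i - cnt s j i) 0 ≤ queue a s i := by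
  obtain ⟨B, hB⟩ := h i
  refine le_csSup ⟨max B 0, ?_⟩ ⟨j, hj, rfl⟩
  rintro q ⟨j', hj', rfl⟩
  exact max_le_max (hB ⟨j', hj', rfl⟩) le_rfl

lemma queue_nonneg (h : FinQ a s) (i : ℤ) : 0 ≤ queue a s i :=
  (le_max_right _ _).trans (max_le_queue h le_rfl)

lemma le_queue (h : FinQ a s) {j i : ℤ} (hj : j ≤ i + 1) :
    cnt a j i - cnt s j i ≤ queue a s i := by
  rcases hj.lt_or_eq with hj | rfl
  · exact (le_max_left _ _).trans (max_le_queue h (by omega))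
  · rw [cnt_of_lt a (by omega), cnt_of_lt s (by omega), sub_zero]
    exact queue_nonneg h i

/-- Lindley's recursion. -/
lemma queue_succ (h : FinQ a s) (l : ℤ) :
    queue a s (l + 1) = max (queue a s l + (a (l + 1) - s (l + 1))) 0 := by
  have hcnt : ∀ j ≤ l + 1, cnt a j (l + 1) - cnt s j (l + 1)
      = cnt a j l - cnt s j l + (a (l + 1) - s (l + 1)) := fun j hj => by
    rw [cnt_succ a hj, cnt_succ s hj]; ring
  apply le_antisymm
  · refine queue_le (le_max_right _ _) fun j hj => ?_
    have := le_queue h (show j ≤ l + 1 by omega)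
    rw [hcnt j hj]
    omega
  · have hlast := le_queue h (show l + 1 ≤ l + 1 + 1 by omega)
    rw [hcnt _ le_rfl, cnt_of_lt a (by omega), cnt_of_lt s (by omega)] at hlast
    have : queue a s l ≤ queue a s (l + 1) - (a (l + 1) - s (l + 1)) :=
      queue_le (by omega) fun j hj => by
        have := le_queue h (show j ≤ l + 1 + 1 by omega)
        rw [hcnt j (by omega)] at this
        omega
    exact max_le (by omega) (queue_nonneg h _)

lemma exists_queue_le (h : FinQ a s) (i : ℤ) :
    ∀ l ≥ i - 1, ∃ k ∈ Icc (i - 1) l,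
      queue a s l ≤ queue a s (i - 1) + (cnt a i l - cnt a i k) - (cnt s i l - cnt s i k) := by
  refine Int.leInduction ⟨i - 1, by simp, by simp⟩ fun l hl ⟨k, hk, hQ⟩ => ?_
  rw [queue_succ h]
  rcases le_total (queue a s l + (a (l + 1) - s (l + 1))) 0 with hempty | hbusy
  · -- the queue is empty at time `l + 1`
    refine ⟨l + 1, by simp; omega, ?_⟩
    have := queue_nonneg h (i - 1)
    omega
  · refine ⟨k, by simp at hk ⊢; omega, ?_⟩
    rw [cnt_succ a (by omega), cnt_succ s (by omega)]
    omega

end Queue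

lemma dep_isConfig (a s : Config) : IsConfig (dep a s) := fun i => by
  unfold dep; split_ifs <;> simp

section Departures

variable {a s : Config}

lemma dep_le (hs : IsConfig s) (k : ℤ) : dep a s k ≤ s k := by
  unfold dep
  rcases hs k with h | h <;> split_ifs <;> simp_all

lemma dep_succ (ha : IsConfig a) (hs : IsConfig s) (h : FinQ a s) (l : ℤ) :
    dep a s (l + 1) = a (l + 1) + queue a s l - queue a s (l + 1) := by
  have := queue_nonneg h l
  rw [queue_succ h]
  simp only [dep, add_sub_cancel_right]
  rcases ha (l + 1) with ha' | ha' <;> rcases hs (l + 1) with hs' | hs' <;>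
    simp only [ha', hs'] <;> split_ifs <;> simp_all <;> omega

lemma cnt_dep_add_queue (ha : IsConfig a) (hs : IsConfig s) (h : FinQ a s) (i : ℤ) :
    ∀ l ≥ i - 1, cnt (dep a s) i l + queue a s l = cnt a i l + queue a s (i - 1) := by
  refine Int.leInduction (by rw [cnt_of_lt _ (by omega), cnt_of_lt _ (by omega)]) ?_
  intro l hl ih
  rw [cnt_succ _ (by omega), cnt_succ _ (by omega), dep_succ ha hs h]
  omega

lemma exists_le_cnt_dep (ha : IsConfig a) (hs : IsConfig s) (h : FinQ a s) {i l : ℤ}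
    (hl : i - 1 ≤ l) :
    ∃ k ∈ Icc (i - 1) l, cnt a i k + (cnt s i l - cnt s i k) ≤ cnt (dep a s) i l := by
  obtain ⟨k, hk, hQ⟩ := exists_queue_le h i l hl
  refine ⟨k, hk, ?_⟩
  have := cnt_dep_add_queue ha hs h i l hl
  omega

end Departures

/-- Letting `l` range over `[i-1, j]` rather than `[i, j]` changes nothing (both terms vanish at
`l = i-1`) but builds in `0 ≤ A`. -/
def DevBound (ρ : ℝ) (i j : ℤ) (x : Config) (A : ℝ) : Prop :=
  ∀ l ∈ Icc (i - 1) j, |(cnt x i l : ℝ) - ρ * ((l : ℝ) - i + 1)| ≤ A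

namespace DevBound

variable {ρ : ℝ} {i j : ℤ} {x : Config} {A : ℝ}

lemma nonneg (h : DevBound ρ i j x A) (hij : i - 1 ≤ j) : 0 ≤ A :=
  (abs_nonneg _).trans (h (i - 1) (by simp [hij]))

lemma mono (h : DevBound ρ i j x A) {B : ℝ} (hAB : A ≤ B) : DevBound ρ i j x B :=
  fun l hl => (h l hl).trans hAB

end DevBound

section Tandem

variable {ρ : ℝ} {i j : ℤ} {A : ℝ}

lemma devBound_dep {a s : Config} {S : ℝ} (ha : IsConfig a) (hs : IsConfig s)
    (hq : FinQ a s) (hA : DevBound ρ i j a A) (hS : DevBound ρ i j s S) :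
    DevBound ρ i j (dep a s) (A + 2 * S) := by
  intro l hl
  have hl' := mem_Icc.mp hl
  have hA0 : 0 ≤ A := hA.nonneg (by omega)
  have hSl := abs_le.mp (hS l hl)
  have hup : (cnt (dep a s) i l : ℝ) ≤ cnt s i l := by
    exact_mod_cast cnt_le_cnt (dep_le hs) i l
  obtain ⟨k, hk, hlow⟩ := exists_le_cnt_dep ha hs hq hl'.1
  have hk' := mem_Icc.mp hk
  have hkj : k ∈ Icc (i - 1) j := mem_Icc.mpr ⟨hk'.1, hk'.2.trans hl'.2⟩
  have hAk := abs_le.mp (hA k hkj)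
  have hSk := abs_le.mp (hS k hkj)
  have hlow' : (cnt a i k : ℝ) + (cnt s i l - cnt s i k) ≤ cnt (dep a s) i l := by
    exact_mod_cast hlow
  rw [abs_le]
  constructor <;> linarith

lemma devBound_dtandem (M : Config → ℝ) :
    ∀ (ss : List Config) (x : Config) (A : ℝ), IsConfig x → (∀ s ∈ ss, IsConfig s) →
      TandemFinQ (x :: ss) → DevBound ρ i j x A → (∀ s ∈ ss, DevBound ρ i j s (M s)) →
      DevBound ρ i j (Dtandem x ss) (A + 2 * (ss.map M).sum)
  | [], _, _, _, _, _, hA, _ => by simpa [Dtandem] using hA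
  | s :: rest, x, A, hx, hss, hfq, hA, hM => by
    rw [TandemFinQ] at hfq
    have hs := hss s List.mem_cons_self
    have hd := devBound_dep hx hs hfq.1 hA (hM s List.mem_cons_self)
    have := devBound_dtandem M rest (dep x s) _ (dep_isConfig x s)
      (fun t ht => hss t (.tail s ht)) hfq.2 hd (fun t ht => hM t (.tail s ht))
    rw [List.map_cons, List.sum_cons]
    exact this.mono (by linarith)

lemma devBound_dtandemList (M : Config → ℝ) (hij : i - 1 ≤ j) {xs : List Config}
    (hne : xs ≠ []) (hxs : ∀ x ∈ xs, IsConfig x) (hfq : TandemFinQ xs)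
    (hM : ∀ x ∈ xs, DevBound ρ i j x (M x)) :
    DevBound ρ i j (DtandemList xs) (2 * (xs.map M).sum) := by
  obtain ⟨x, ss, rfl⟩ := List.exists_cons_of_ne_nil hne
  have hx := hM x List.mem_cons_self
  have := devBound_dtandem M ss x _ (hxs x List.mem_cons_self) (fun t ht => hxs t (.tail x ht))
    hfq hx (fun t ht => hM t (.tail x ht))
  rw [List.map_cons, List.sum_cons]
  exact this.mono (by linarith [hx.nonneg hij])

lemma sup'_le_iff_devBound {x : Config} (hij : i ≤ j) :
    (Icc i j).sup' (nonempty_Icc.mpr hij)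
        (fun l => |(cnt x i l : ℝ) - ρ * ((l : ℝ) - (i : ℝ) + 1)|) ≤ A ↔ DevBound ρ i j x A := by
  rw [sup'_le_iff]
  refine ⟨fun h l hl => ?_, fun h l hl => h l (Icc_subset_Icc_left (by omega) hl)⟩
  rcases (mem_Icc.mp hl).1.eq_or_lt with rfl | hil
  · rw [cnt_of_lt x (by omega)]
    exact le_trans (by simp) (h i (by simp [hij]))
  · exact h l (mem_Icc.mpr ⟨by omega, (mem_Icc.mp hl).2⟩)

end Tandem

theorem stmt8_general (i j : ℤ) (hij : i ≤ j) (n : ℕ) (hn : 2 ≤ n)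
    (ρ : ℝ) (x : Fin n → Config) (hx : ∀ k, IsConfig (x k))
    (hfq : TandemFinQ (List.ofFn x)) :
    (Finset.Icc i j).sup' (Finset.nonempty_Icc.mpr hij)
        (fun l => |(cnt (DtandemN x) i l : ℝ) - ρ * ((l : ℝ) - (i : ℝ) + 1)|)
      ≤ 2 * ∑ k : Fin n, (Finset.Icc i j).sup' (Finset.nonempty_Icc.mpr hij)
          (fun l => |(cnt (x k) i l : ℝ) - ρ * ((l : ℝ) - (i : ℝ) + 1)|) := by
  set M : Config → ℝ := fun c => (Icc i j).sup' (nonempty_Icc.mpr hij)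
    fun l => |(cnt c i l : ℝ) - ρ * ((l : ℝ) - (i : ℝ) + 1)|
  have hM (c : Config) : DevBound ρ i j c (M c) := (sup'_le_iff_devBound hij).1 le_rfl
  have hd := devBound_dtandemList M (by omega) (by simp [List.ofFn_eq_nil_iff]; omega)
    (by simpa [List.mem_ofFn] using hx) hfq fun c _ => hM c
  rw [List.map_ofFn, List.sum_ofFn] at hd
  exact (sup'_le_iff_devBound hij).2 hd

/-- With `dₙ = Dⁿ(x₁,…,xₙ)` (all queue lengths in its recursive
definition being finite),
`max_{l ∈ [i,j]} |dₙ[i,l] − ρ(l−i+1)| ≤ 2 ∑_{k=1}^n max_{l ∈ [i,j]} |x_k[i,l] − ρ(l−i+1)|`. -/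
theorem stmt8 (i j : ℤ) (hij : i ≤ j) (n : ℕ) (hn : 2 ≤ n)
    (ρ : ℝ) (hρ0 : 0 < ρ) (hρ1 : ρ < 1)
    (x : Fin n → Config) (hx : ∀ k, IsConfig (x k))
    (hfq : TandemFinQ (List.ofFn x)) :
    (Finset.Icc i j).sup' (Finset.nonempty_Icc.mpr hij)
        (fun l => |(cnt (DtandemN x) i l : ℝ) - ρ * ((l : ℝ) - (i : ℝ) + 1)|)
      ≤ 2 * ∑ k : Fin n, (Finset.Icc i j).sup' (Finset.nonempty_Icc.mpr hij)
          (fun l => |(cnt (x k) i l : ℝ) - ρ * ((l : ℝ) - (i : ℝ) + 1)|) :=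
  stmt8_general i j hij n hn ρ x hx hfq
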